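/- arXiv:1506.04784 — 2 statements merged into one kernel-verified Lean document; each statement's English description precedes it below -/
import Mathlib

section
/- Let p be a positive real number and let α₁, α₂, α₃, α₄ be complex numbers with |αᵢ| = √p for all i. If the sum of the six pairwise products Σ_{1 ≤ i < j ≤ 4} αᵢαⱼ equals 6p, then either αᵢ = √p for all i, or αᵢ = −√p for all i. -/
/-! Each of the six products `αᵢαⱼ` has norm `p`, so its real part is at most `p`; as the real
parts add up to `6p`, every product has real part equal to its norm, i.e. `αᵢαⱼ = p`. With three
indices available, `αₖαᵢ = αₖαⱼ` cancels to `αᵢ = αⱼ`, so all `αᵢ` equal one `a` with `a² = p`. -/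

open Finset
open scoped ComplexOrder

theorem Complex.eq_of_norm_le_of_sum_eq {ι : Type*} {s : Finset ι} {f : ι → ℂ} {r : ℝ}
    (hle : ∀ i ∈ s, ‖f i‖ ≤ r) (hsum : ∑ i ∈ s, f i = s.card * r) :
    ∀ i ∈ s, f i = r := by
  have hre_le : ∀ i ∈ s, (f i).re ≤ r := fun i hi => (re_le_norm _).trans (hle i hi)
  have hre_sum : ∑ i ∈ s, (f i).re = ∑ _i ∈ s, r := by
    simpa [re_sum] using congrArg re hsum
  intro i hi
  have hre : (f i).re = r := (sum_eq_sum_iff_of_le hre_le).mp hre_sum i hi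
  have hnonneg : 0 ≤ f i := re_eq_norm.mp (le_antisymm (re_le_norm _) (hre ▸ hle i hi))
  rw [eq_re_of_ofReal_le hnonneg, hre]

theorem eq_of_forall_ne_mul_eq {ι M : Type*} [MonoidWithZero M] [IsLeftCancelMulZero M]
    {α : ι → M} {c : M}
    (h3 : 3 ≤ ENat.card ι) (hne : ∀ i, α i ≠ 0) (hmul : ∀ i j, i ≠ j → α i * α j = c)
    (i j : ι) : α i = α j := by
  obtain ⟨k, hki, hkj⟩ := ENat.exists_ne_ne_of_three_le h3 i j
  exact mul_left_cancel₀ (hne k) ((hmul k i hki).trans (hmul k j hkj).symm)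

theorem all_eq_sqrt_of_sum_pairwise_prod (p : ℝ) (hp : 0 < p) (α : Fin 4 → ℂ)
    (habs : ∀ i, ‖α i‖ = Real.sqrt p)
    (hsum : ∑ ij ∈ Finset.univ.filter (fun ij : Fin 4 × Fin 4 => ij.1 < ij.2),
      α ij.1 * α ij.2 = (6 * p : ℂ)) :
    (∀ i, α i = (Real.sqrt p : ℂ)) ∨ (∀ i, α i = -(Real.sqrt p : ℂ)) := by
  have hnorm : ∀ i j, ‖α i * α j‖ = p := fun i j => by
    rw [norm_mul, habs, habs, Real.mul_self_sqrt hp.le]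
  have hcard : (univ.filter fun ij : Fin 4 × Fin 4 => ij.1 < ij.2).card = 6 := by decide
  have hlt : ∀ i j, i < j → α i * α j = p := fun i j hij =>
    Complex.eq_of_norm_le_of_sum_eq (fun ij _ => (hnorm ij.1 ij.2).le)
      (by rw [hsum, hcard]; norm_num) (i, j) (by simpa using hij)
  have hmul : ∀ i j, i ≠ j → α i * α j = p := fun i j hij =>
    hij.lt_or_gt.elim (hlt i j) fun hji => mul_comm (α i) (α j) ▸ hlt j i hji
  have hne : ∀ i, α i ≠ 0 := fun i h => by
    simpa [h, hp.ne] using hnorm i i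
  have heq : ∀ i, α i = α 0 := fun i =>
    eq_of_forall_ne_mul_eq (by norm_num) hne hmul i 0
  have hsq : α 0 * α 0 = (Real.sqrt p : ℂ) * (Real.sqrt p : ℂ) := by
    rw [← Complex.ofReal_mul, Real.mul_self_sqrt hp.le, ← hmul 1 0 (by decide), heq 1]
  rcases mul_self_eq_mul_self_iff.mp hsq with h | h
  · exact .inl fun i => (heq i).trans h
  · exact .inr fun i => (heq i).trans h
end

section
/- Let p be a prime number. There is no monic polynomial P of degree 4 with integer coefficients such that every complex root of P has absolute value √p and the coefficient of X² in P equals 6p. -/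
/-! The six products of two roots have norm `p` and sum to `6p`, so all of them equal `p`.
Then every root squares to `p`, the coefficient of `X³` satisfies `a₁² = (∑ roots)² = 16p`,
and `√p = |a₁| / 4` would be rational. -/

open Polynomial

namespace Complex

theorem eq_of_norm_le_of_le_re {w : ℂ} {r : ℝ} (hnorm : ‖w‖ ≤ r) (hre : r ≤ w.re) :
    w = r := by
  have hre_eq : w.re = r := le_antisymm ((re_le_norm w).trans hnorm) hre
  have him : w.im = 0 := abs_re_eq_norm.mp (by
    rw [abs_of_nonneg (by linarith [norm_nonneg w])]
    linarith [re_le_norm w])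
  exact ext (by simp [hre_eq]) (by simp [him])

theorem eq_of_norm_le_of_sum_eq_s6 {m : Multiset ℂ} {r : ℝ} (hnorm : ∀ w ∈ m, ‖w‖ ≤ r)
    (hsum : m.sum = m.card * r) : ∀ w ∈ m, w = r := by
  by_contra! ⟨w, hw, hne⟩
  have hlt : (m.map re).sum < (m.map fun _ ↦ r).sum :=
    Multiset.sum_lt_sum (fun z hz ↦ (re_le_norm z).trans (hnorm z hz))
      ⟨w, hw, lt_of_le_of_ne ((re_le_norm w).trans (hnorm w hw))
        fun h ↦ hne (eq_of_norm_le_of_le_re (hnorm w hw) h.ge)⟩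
  have hre : (m.map re).sum = m.card * r :=
    calc (m.map re).sum = m.sum.re := (map_multiset_sum reAddGroupHom m).symm
      _ = m.card * r := by simp [hsum]
  simp [hre] at hlt

end Complex

theorem sq_eq_of_mul_eq_of_mul_eq_of_mul_eq {M : Type*} [CommMonoidWithZero M]
    [IsCancelMulZero M] {x y z e : M} (he : e ≠ 0) (hxy : x * y = e) (hxz : x * z = e)
    (hyz : y * z = e) : x ^ 2 = e :=
  mul_right_cancel₀ he <| calc
    x ^ 2 * e = (x * y) * (x * z) := by rw [← hyz, sq, mul_mul_mul_comm]
    _ = e * e := by rw [hxy, hxz]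

theorem Complex.add_add_add_sq_eq_sixteen_mul_of_norm_eq {a b c d : ℂ} {r : ℝ} (hr : r ≠ 0)
    (ha : ‖a‖ = r) (hb : ‖b‖ = r) (hc : ‖c‖ = r) (hd : ‖d‖ = r)
    (h : a * b + a * c + a * d + b * c + b * d + c * d = 6 * r ^ 2) :
    (a + b + c + d) ^ 2 = 16 * r ^ 2 := by
  have hpair := eq_of_norm_le_of_sum_eq_s6 (m := {a * b, a * c, a * d, b * c, b * d, c * d})
    (r := r ^ 2) (by simp [ha, hb, hc, hd, sq]) (by simp [← h, add_assoc])
  simp only [Multiset.insert_eq_cons, Multiset.mem_cons, Multiset.mem_singleton,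
    forall_eq_or_imp, forall_eq, ofReal_pow] at hpair
  obtain ⟨hab, hac, had, hbc, hbd, hcd⟩ := hpair
  have he : (r : ℂ) ^ 2 ≠ 0 := by simpa using hr
  have ha2 := sq_eq_of_mul_eq_of_mul_eq_of_mul_eq he hab hac hbc
  have hb2 := sq_eq_of_mul_eq_of_mul_eq_of_mul_eq he (by rwa [mul_comm]) hbc hac
  have hc2 := sq_eq_of_mul_eq_of_mul_eq_of_mul_eq he (by rwa [mul_comm]) hcd had
  have hd2 := sq_eq_of_mul_eq_of_mul_eq_of_mul_eq he (by rwa [mul_comm]) (by rwa [mul_comm]) hab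
  linear_combination ha2 + hb2 + hc2 + hd2 + 2 * h

theorem Polynomial.Monic.exists_roots_eq_of_natDegree_eq_four {K : Type*} [Field K]
    [IsAlgClosed K] {Q : K[X]} (hQ : Q.Monic) (hdeg : Q.natDegree = 4) :
    ∃ a b c d, Q.roots = {a, b, c, d} ∧ Q.coeff 3 = -(a + b + c + d) ∧
      Q.coeff 2 = a * b + a * c + a * d + b * c + b * d + c * d := by
  have hcard : Q.roots.card = Q.natDegree := splits_iff_card_roots.mp (IsAlgClosed.splits Q)
  obtain ⟨a, b, c, d, hroots⟩ := Multiset.card_eq_four.mp (hcard.trans hdeg)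
  refine ⟨a, b, c, d, hroots, ?_, ?_⟩
  · rw [coeff_eq_esymm_roots_of_card hcard (by omega), hQ.leadingCoeff, hdeg, hroots]
    simp [Multiset.esymm, Multiset.powersetCard_one, add_comm, add_left_comm]
  · rw [coeff_eq_esymm_roots_of_card hcard (by omega), hQ.leadingCoeff, hdeg, hroots]
    simp [Multiset.esymm, Multiset.powersetCard_cons, Multiset.powersetCard_one, add_assoc,
      add_comm, add_left_comm]

theorem Int.sq_ne_sixteen_mul {p : ℕ} (hp : ¬IsSquare p) (n : ℤ) : n ^ 2 ≠ 16 * p := by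
  intro h
  refine (irrational_sqrt_natCast_iff.mpr hp) ⟨|n| / 4, ?_⟩
  rw [eq_comm, Real.sqrt_eq_iff_eq_sq (by positivity) (by positivity)]
  push_cast
  rw [div_pow, sq_abs, ← Int.cast_pow, h]
  push_cast
  ring

open Polynomial in
theorem no_monic_quartic_with_coeff_two_eq_six_p (p : ℕ) (hp : p.Prime) :
    ¬ ∃ P : Polynomial ℤ, P.Monic ∧ P.natDegree = 4 ∧
      (∀ z : ℂ, (P.map (Int.castRingHom ℂ)).IsRoot z → ‖z‖ = Real.sqrt p) ∧
      P.coeff 2 = 6 * p := by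
  rintro ⟨P, hmon, hdeg, hroots, hc2⟩
  obtain ⟨a, b, c, d, hQroots, hcoeff3, hcoeff2⟩ :=
    (hmon.map (Int.castRingHom ℂ)).exists_roots_eq_of_natDegree_eq_four
      (by rwa [natDegree_map_eq_of_injective (RingHom.injective_int _)])
  have hnorm : ∀ z ∈ ({a, b, c, d} : Multiset ℂ), ‖z‖ = √p :=
    fun z hz ↦ hroots z (isRoot_of_mem_roots (hQroots ▸ hz))
  have hsqrt_sq : ((√p : ℝ) : ℂ) ^ 2 = p := by
    rw [← Complex.ofReal_pow, Real.sq_sqrt p.cast_nonneg, Complex.ofReal_natCast]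
  have hsum := Complex.add_add_add_sq_eq_sixteen_mul_of_norm_eq
    (Real.sqrt_ne_zero'.mpr (by exact_mod_cast hp.pos))
    (hnorm a (by simp)) (hnorm b (by simp)) (hnorm c (by simp)) (hnorm d (by simp))
    (by rw [← hcoeff2, coeff_map, hc2, hsqrt_sq]; simp)
  have hcoeff3' : ((P.coeff 3 : ℤ) : ℂ) = -(a + b + c + d) := by
    rw [← hcoeff3, coeff_map]; rfl
  refine Int.sq_ne_sixteen_mul hp.not_isSquare (P.coeff 3) ?_
  exact_mod_cast (show ((P.coeff 3 : ℤ) : ℂ) ^ 2 = 16 * p by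
    rw [hcoeff3', neg_sq, hsum, hsqrt_sq])
end
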